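/- If Y = Xμ* exactly and X has full column rank n, then as σ → 0 the posterior mean converges to μ*: more precisely, for exact data the error satisfies ‖μ₁ − μ*‖ ≤ ‖Σ₁‖·‖Σ₀⁻¹‖·‖μ₀ − μ*‖ and ‖Σ₁‖ ≤ σ²/λ_min(XᵀX), so ‖μ₁ − μ*‖ ≤ (σ²/λ_min(XᵀX))·‖Σ₀⁻¹‖·‖μ₀ − μ*‖. -/

import Mathlib

open Matrix

/-- Spectral (operator) norm of a real matrix, as the operator norm of the
induced linear map between Euclidean spaces. -/
noncomputable def opNorm {a b : ℕ} (M : Matrix (Fin a) (Fin b) ℝ) : ℝ :=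
  ‖LinearMap.toContinuousLinearMap (Matrix.toEuclideanLin M)‖

/-- Euclidean norm of a real vector. -/
noncomputable def euclNorm {a : ℕ} (v : Fin a → ℝ) : ℝ :=
  ‖(EuclideanSpace.equiv (Fin a) ℝ).symm v‖

lemma enorm_nonneg' {a : ℕ} (v : Fin a → ℝ) : 0 ≤ euclNorm v := norm_nonneg _

lemma opNorm_nonneg' {a b : ℕ} (M : Matrix (Fin a) (Fin b) ℝ) : 0 ≤ opNorm M :=
  norm_nonneg _

lemma enorm_mulVec_le {a b : ℕ} (M : Matrix (Fin a) (Fin b) ℝ) (v : Fin b → ℝ) :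
    euclNorm (M.mulVec v) ≤ opNorm M * euclNorm v := by
  have h := (LinearMap.toContinuousLinearMap (Matrix.toEuclideanLin M)).le_opNorm
      ((EuclideanSpace.equiv (Fin b) ℝ).symm v)
  have he : (LinearMap.toContinuousLinearMap (Matrix.toEuclideanLin M))
      ((EuclideanSpace.equiv (Fin b) ℝ).symm v)
      = (EuclideanSpace.equiv (Fin a) ℝ).symm (M.mulVec v) := rfl
  rw [he] at h
  exact h

lemma opNorm_le_of_forall {a b : ℕ} (M : Matrix (Fin a) (Fin b) ℝ) {c : ℝ} (hc : 0 ≤ c)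
    (h : ∀ v : Fin b → ℝ, euclNorm (M.mulVec v) ≤ c * euclNorm v) : opNorm M ≤ c := by
  refine ContinuousLinearMap.opNorm_le_bound _ hc fun x => ?_
  have h2 := h ((EuclideanSpace.equiv (Fin b) ℝ) x)
  have he : (LinearMap.toContinuousLinearMap (Matrix.toEuclideanLin M)) x
      = (EuclideanSpace.equiv (Fin a) ℝ).symm (M.mulVec ((EuclideanSpace.equiv (Fin b) ℝ) x)) :=
    rfl
  have he2 : ((EuclideanSpace.equiv (Fin b) ℝ).symm ((EuclideanSpace.equiv (Fin b) ℝ) x)) = x :=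
    (EuclideanSpace.equiv (Fin b) ℝ).symm_apply_apply x
  rw [he]
  calc ‖(EuclideanSpace.equiv (Fin a) ℝ).symm (M.mulVec ((EuclideanSpace.equiv (Fin b) ℝ) x))‖
      = euclNorm (M.mulVec ((EuclideanSpace.equiv (Fin b) ℝ) x)) := rfl
    _ ≤ c * euclNorm ((EuclideanSpace.equiv (Fin b) ℝ) x) := h2
    _ = c * ‖x‖ := by rw [show euclNorm ((EuclideanSpace.equiv (Fin b) ℝ) x) = ‖x‖ from by
        unfold euclNorm; rw [he2]]

lemma dot_le_enorm_mul_enorm {a : ℕ} (u v : Fin a → ℝ) : u ⬝ᵥ v ≤ euclNorm u * euclNorm v := by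
  have h := real_inner_le_norm ((EuclideanSpace.equiv (Fin a) ℝ).symm u)
      ((EuclideanSpace.equiv (Fin a) ℝ).symm v)
  have he : (inner ℝ ((EuclideanSpace.equiv (Fin a) ℝ).symm u)
      ((EuclideanSpace.equiv (Fin a) ℝ).symm v) : ℝ) = u ⬝ᵥ v := by
    simp [PiLp.inner_apply, dotProduct, RCLike.inner_apply, mul_comm]
  rw [he] at h
  exact h

lemma posdef_smul' {a : ℕ} {M : Matrix (Fin a) (Fin a) ℝ} (hM : M.PosDef) {c : ℝ} (hc : 0 < c) :
    (c • M).PosDef := by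
  refine ⟨?_, fun x hx => ?_⟩
  · unfold Matrix.IsHermitian
    rw [conjTranspose_smul, hM.1]
    simp
  · exact (hM.smul hc).2 hx

theorem blr_exact_data_convergence
    {n d : ℕ}
    (Sigma0 : Matrix (Fin n) (Fin n) ℝ) (X : Matrix (Fin d) (Fin n) ℝ)
    (σ : ℝ) (hσ : 0 < σ) (hSigma0 : Sigma0.PosDef)
    (hXX : (Xᵀ * X).PosDef)
    (lam : ℝ) (hlam : 0 < lam)
    (hmin : ∀ v : Fin n → ℝ, lam * (euclNorm v) ^ 2 ≤ v ⬝ᵥ (Xᵀ * X).mulVec v)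
    (μ0 μstar : Fin n → ℝ)
    (Y : Fin d → ℝ) (hY : Y = X.mulVec μstar)
    (Sigma1 : Matrix (Fin n) (Fin n) ℝ)
    (hSigma1 : Sigma1 = ((σ ^ 2)⁻¹ • (Xᵀ * X) + Sigma0⁻¹)⁻¹)
    (μ1 : Fin n → ℝ)
    (hμ1 : μ1 = Sigma1.mulVec ((σ ^ 2)⁻¹ • Xᵀ.mulVec Y + Sigma0⁻¹.mulVec μ0)) :
    euclNorm (μ1 - μstar) ≤ opNorm Sigma1 * opNorm Sigma0⁻¹ * euclNorm (μ0 - μstar) ∧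
    opNorm Sigma1 ≤ σ ^ 2 / lam ∧
    euclNorm (μ1 - μstar) ≤ (σ ^ 2 / lam) * opNorm Sigma0⁻¹ * euclNorm (μ0 - μstar) := by
  have hσ2 : (0:ℝ) < σ ^ 2 := by positivity
  set A : Matrix (Fin n) (Fin n) ℝ := (σ ^ 2)⁻¹ • (Xᵀ * X) + Sigma0⁻¹ with hAdef
  have hA : A.PosDef := (posdef_smul' hXX (by positivity)).add_posSemidef hSigma0.inv.posSemidef
  have hdet : IsUnit A.det := isUnit_iff_ne_zero.mpr hA.det_pos.ne'
  have hSA : Sigma1 * A = 1 := by rw [hSigma1]; exact Matrix.nonsing_inv_mul A hdet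
  have hAS : A * Sigma1 = 1 := by
    rw [hSigma1]; exact Matrix.mul_nonsing_inv A hdet
  -- the key identity
  have hstar : μstar = Sigma1.mulVec (A.mulVec μstar) := by
    rw [mulVec_mulVec, hSA, one_mulVec]
  have hμdiff : μ1 - μstar = Sigma1.mulVec (Sigma0⁻¹.mulVec (μ0 - μstar)) := by
    calc μ1 - μstar
        = Sigma1.mulVec ((σ ^ 2)⁻¹ • Xᵀ.mulVec Y + Sigma0⁻¹.mulVec μ0)
          - Sigma1.mulVec (A.mulVec μstar) := by rw [← hμ1, ← hstar]
      _ = Sigma1.mulVec (((σ ^ 2)⁻¹ • Xᵀ.mulVec Y + Sigma0⁻¹.mulVec μ0) - A.mulVec μstar) := by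
          rw [mulVec_sub]
      _ = Sigma1.mulVec (Sigma0⁻¹.mulVec (μ0 - μstar)) := by
          have hvec : ((σ ^ 2)⁻¹ • Xᵀ.mulVec Y + Sigma0⁻¹.mulVec μ0) - A.mulVec μstar
              = Sigma0⁻¹.mulVec (μ0 - μstar) := by
            rw [hY, mulVec_mulVec, hAdef, add_mulVec, smul_mulVec, mulVec_sub]
            abel
          rw [hvec]
  -- bound for Sigma1
  have hbound : ∀ v : Fin n → ℝ, euclNorm (Sigma1.mulVec v) ≤ σ ^ 2 / lam * euclNorm v := by
    intro v
    set w : Fin n → ℝ := Sigma1.mulVec v with hwdef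
    have hv : A.mulVec w = v := by
      rw [hwdef, mulVec_mulVec, hAS, one_mulVec]
    have hlow : lam / σ ^ 2 * euclNorm w ^ 2 ≤ w ⬝ᵥ A.mulVec w := by
      have h1 := hmin w
      have h2 : (0:ℝ) ≤ w ⬝ᵥ Sigma0⁻¹.mulVec w := by
        have := hSigma0.inv.posSemidef.dotProduct_mulVec_nonneg w
        simpa using this
      have hcalc : w ⬝ᵥ A.mulVec w
          = (σ ^ 2)⁻¹ * (w ⬝ᵥ (Xᵀ * X).mulVec w) + w ⬝ᵥ Sigma0⁻¹.mulVec w := by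
        rw [hAdef, add_mulVec, smul_mulVec, dotProduct_add, dotProduct_smul]
        rfl
      rw [hcalc]
      have : lam / σ ^ 2 * euclNorm w ^ 2 ≤ (σ ^ 2)⁻¹ * (w ⬝ᵥ (Xᵀ * X).mulVec w) := by
        have h3 := mul_le_mul_of_nonneg_left h1 (inv_nonneg.mpr hσ2.le)
        calc lam / σ ^ 2 * euclNorm w ^ 2 = (σ ^ 2)⁻¹ * (lam * euclNorm w ^ 2) := by
              field_simp
          _ ≤ _ := h3
      linarith
    have hhigh : w ⬝ᵥ A.mulVec w ≤ euclNorm w * euclNorm v := by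
      rw [hv] at *
      exact dot_le_enorm_mul_enorm w v
    rcases eq_or_lt_of_le (enorm_nonneg' w) with h0 | h0
    · rw [← h0]
      exact mul_nonneg (by positivity) (enorm_nonneg' v)
    · have key : lam / σ ^ 2 * euclNorm w ^ 2 ≤ euclNorm w * euclNorm v := le_trans hlow hhigh
      have key2 : lam * euclNorm w ^ 2 ≤ σ ^ 2 * (euclNorm w * euclNorm v) := by
        have h4 := mul_le_mul_of_nonneg_left key hσ2.le
        calc lam * euclNorm w ^ 2 = σ ^ 2 * (lam / σ ^ 2 * euclNorm w ^ 2) := by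
              field_simp
          _ ≤ _ := h4
      rw [div_mul_eq_mul_div, le_div_iff₀ hlam]
      have h5 : (euclNorm w * lam) * euclNorm w ≤ (σ ^ 2 * euclNorm v) * euclNorm w := by
        nlinarith [key2]
      exact le_of_mul_le_mul_right h5 h0
  have h2 : opNorm Sigma1 ≤ σ ^ 2 / lam := opNorm_le_of_forall _ (by positivity) hbound
  have h1 : euclNorm (μ1 - μstar) ≤ opNorm Sigma1 * opNorm Sigma0⁻¹ * euclNorm (μ0 - μstar) := by
    rw [hμdiff]
    calc euclNorm (Sigma1.mulVec (Sigma0⁻¹.mulVec (μ0 - μstar)))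
        ≤ opNorm Sigma1 * euclNorm (Sigma0⁻¹.mulVec (μ0 - μstar)) := enorm_mulVec_le _ _
      _ ≤ opNorm Sigma1 * (opNorm Sigma0⁻¹ * euclNorm (μ0 - μstar)) :=
          mul_le_mul_of_nonneg_left (enorm_mulVec_le _ _) (opNorm_nonneg' _)
      _ = opNorm Sigma1 * opNorm Sigma0⁻¹ * euclNorm (μ0 - μstar) := by ring
  refine ⟨h1, h2, ?_⟩
  calc euclNorm (μ1 - μstar) ≤ opNorm Sigma1 * opNorm Sigma0⁻¹ * euclNorm (μ0 - μstar) := h1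
    _ ≤ (σ ^ 2 / lam) * opNorm Sigma0⁻¹ * euclNorm (μ0 - μstar) := by
        have := mul_le_mul_of_nonneg_right h2 (opNorm_nonneg' (M := Sigma0⁻¹))
        exact mul_le_mul_of_nonneg_right (by exact this) (enorm_nonneg' _)
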